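/- The lattice of systems on a finite lattice P is modular if and only if P is linearly ordered. -/

import Mathlib

def IsSystem {P : Type*} [Lattice P] (f : P → P) : Prop :=
  (∀ a, a ≤ f a) ∧ Monotone f ∧ ∀ a, f (f a) = f a

def sysMeet {P : Type*} [Lattice P] (f g : P → P) : P → P := fun a => f a ⊓ g a

def sysJoin {P : Type*} [Lattice P] [Fintype P] (f g : P → P) : P → P :=
  (f ∘ g)^[Fintype.card P]

/-!
On a finite lattice, `sysJoin f g x` is the least point above `x` fixed by both `f` and `g`, so
`sysJoin` is the join of the lattice of systems and `sysMeet` its meet. The inequality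
`h ∨ (f ∧ g) ≤ (h ∨ f) ∧ g` for `h ≤ g` holds in any lattice. For the reverse one, the point
`y = (h ∨ (f ∧ g)) x` satisfies `f y ⊓ g y = y`; in a chain this forces `f y = y` or `g y = y`,
and either way `y` bounds `(h ∨ f) x ⊓ g x`. If instead `a` and `b` are incomparable, the systems
`f = (· ⊔ b)`, `g = (· ⊔ a)` and `h`, which sends every point below `a ⊓ b` to `a ⊓ b` and acts as
`g` elsewhere, break modularity at `a ⊓ b`: the left side is `a ⊓ b` and the right side is `a`.
-/

open Function

section Iterate

variable {α : Type*} [PartialOrder α] {e : α → α}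

theorem isFixedPt_iterate_card [Fintype α] (he : id ≤ e) (x : α) :
    IsFixedPt e (e^[Fintype.card α] x) := by
  obtain ⟨i, j, hij, hij_eq⟩ := Fintype.exists_ne_map_eq_of_card_lt
    (fun k : Fin (Fintype.card α + 1) => e^[k] x) (by simp)
  wlog hlt : i < j generalizing i j
  · exact this j i hij.symm hij_eq.symm (lt_of_le_of_ne (not_lt.mp hlt) hij.symm)
  have hfix : IsFixedPt e (e^[i] x) := by
    refine le_antisymm ?_ (he _)
    calc e (e^[i] x) = e^[i + 1] x := (iterate_succ_apply' e i x).symm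
      _ ≤ e^[j] x := monotone_iterate_of_id_le he (Nat.succ_le_of_lt hlt) x
      _ = e^[i] x := hij_eq.symm
  obtain ⟨k, hk⟩ := Nat.exists_eq_add_of_le (Nat.lt_succ_iff.mp i.isLt)
  rw [hk, add_comm, iterate_add_apply, iterate_fixed hfix]
  exact hfix

end Iterate

section Systems

variable {P : Type*} [Lattice P] {f g h : P → P}

namespace IsSystem

theorem le_apply (hf : IsSystem f) (x : P) : x ≤ f x := hf.1 x

theorem monotone (hf : IsSystem f) : Monotone f := hf.2.1

theorem map_map (hf : IsSystem f) (x : P) : f (f x) = f x := hf.2.2 x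

theorem sysMeet (hf : IsSystem f) (hg : IsSystem g) : IsSystem (sysMeet f g) :=
  ⟨fun x => le_inf (hf.le_apply x) (hg.le_apply x),
    fun _ _ hxy => inf_le_inf (hf.monotone hxy) (hg.monotone hxy),
    fun x => le_antisymm
      (inf_le_inf ((hf.monotone inf_le_left).trans_eq (hf.map_map x))
        ((hg.monotone inf_le_right).trans_eq (hg.map_map x)))
      (le_inf (hf.le_apply _) (hg.le_apply _))⟩

theorem isLeast_sysJoin [Fintype P] (hf : IsSystem f) (hg : IsSystem g) (x : P) :
    IsLeast {z | x ≤ z ∧ f z = z ∧ g z = z} (sysJoin f g x) := by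
  have hfg_id : id ≤ f ∘ g := fun a => (hg.le_apply a).trans (hf.le_apply _)
  refine ⟨?_, fun z ⟨hxz, hfz, hgz⟩ => ?_⟩
  · set y := sysJoin f g x
    have hfix : f (g y) = y := isFixedPt_iterate_card hfg_id x
    have hgy : g y = y := le_antisymm ((hf.le_apply _).trans hfix.le) (hg.le_apply y)
    exact ⟨id_le_iterate_of_id_le hfg_id _ x, by rwa [hgy] at hfix, hgy⟩
  · have hfgz : IsFixedPt (f ∘ g) z := by simp [IsFixedPt, hgz, hfz]
    calc sysJoin f g x ≤ (f ∘ g)^[Fintype.card P] z := (hf.monotone.comp hg.monotone).iterate _ hxz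
      _ = z := iterate_fixed hfgz _

theorem sysJoin_eq_self [Fintype P] (hf : IsSystem f) (hg : IsSystem g) {x : P} (hfx : f x = x)
    (hgx : g x = x) : sysJoin f g x = x :=
  le_antisymm ((hf.isLeast_sysJoin hg x).2 ⟨le_rfl, hfx, hgx⟩) (hf.isLeast_sysJoin hg x).1.1

end IsSystem

theorem isSystem_sup_right (b : P) : IsSystem (· ⊔ b) :=
  ⟨fun _ => le_sup_left, fun _ _ hxy => sup_le_sup_right hxy b, fun x => by simp⟩

theorem isSystem_ite_le_sup [DecidableLE P] {c a : P} (hca : c ≤ a) :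
    IsSystem fun x => if x ≤ c then c else x ⊔ a := by
  refine ⟨fun x => ?_, fun x y hxy => ?_, fun x => ?_⟩
  · dsimp only
    split_ifs with hx
    exacts [hx, le_sup_left]
  · by_cases hy : y ≤ c
    · simp [hxy.trans hy, hy]
    · dsimp only
      split_ifs with hx
      exacts [hca.trans le_sup_right, sup_le_sup_right hxy a]
  · by_cases hx : x ≤ c
    · simp [hx]
    · have hxa : ¬ x ⊔ a ≤ c := fun hle => hx (le_sup_left.trans hle)
      simp [hx, hxa]

variable [Fintype P]

theorem sysJoin_sysMeet_le_sysMeet_sysJoin (hf : IsSystem f) (hg : IsSystem g) (hh : IsSystem h)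
    (hhg : ∀ a, h a ≤ g a) : sysJoin h (sysMeet f g) ≤ sysMeet (sysJoin h f) g := by
  intro x
  have hleast := hh.isLeast_sysJoin (hf.sysMeet hg) x
  obtain ⟨hxz, hhz, hfz⟩ := (hh.isLeast_sysJoin hf x).1
  refine le_inf (hleast.2 ⟨hxz, hhz, ?_⟩) (hleast.2 ⟨hg.le_apply x, ?_, ?_⟩)
  · simp only [sysMeet, hfz, inf_eq_left.mpr (hg.le_apply _)]
  · exact le_antisymm ((hhg _).trans_eq (hg.map_map x)) (hh.le_apply _)
  · simp only [sysMeet, hg.map_map x, inf_eq_right.mpr (hf.le_apply _)]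

theorem sysMeet_sysJoin_le_sysJoin_sysMeet (hlin : ∀ a b : P, a ≤ b ∨ b ≤ a) (hf : IsSystem f)
    (hg : IsSystem g) (hh : IsSystem h) : sysMeet (sysJoin h f) g ≤ sysJoin h (sysMeet f g) := by
  intro x
  obtain ⟨hxy, hhy, hmy⟩ := (hh.isLeast_sysJoin (hf.sysMeet hg) x).1
  set y := sysJoin h (sysMeet f g) x
  change f y ⊓ g y = y at hmy
  rcases hlin (f y) (g y) with hfg | hgf
  · have hfy : f y = y := (inf_eq_left.mpr hfg).symm.trans hmy
    exact inf_le_left.trans ((hh.isLeast_sysJoin hf x).2 ⟨hxy, hhy, hfy⟩)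
  · have hgy : g y = y := (inf_eq_right.mpr hgf).symm.trans hmy
    exact inf_le_right.trans ((hg.monotone hxy).trans_eq hgy)

theorem exists_isSystem_sysJoin_sysMeet_ne {a b : P} (hab : ¬ a ≤ b) (hba : ¬ b ≤ a) :
    ∃ f g h : P → P, IsSystem f ∧ IsSystem g ∧ IsSystem h ∧ (∀ x, h x ≤ g x) ∧
      sysJoin h (sysMeet f g) ≠ sysMeet (sysJoin h f) g := by
  classical
  set c := a ⊓ b
  have hca : c ≤ a := inf_le_left
  set F : P → P := (· ⊔ b)
  set G : P → P := (· ⊔ a)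
  set H : P → P := fun x => if x ≤ c then c else x ⊔ a
  have hF : IsSystem F := isSystem_sup_right b
  have hG : IsSystem G := isSystem_sup_right a
  have hH : IsSystem H := isSystem_ite_le_sup hca
  have hHG : ∀ x, H x ≤ G x := fun x => by
    simp only [H, G]
    split_ifs
    exacts [hca.trans le_sup_right, le_rfl]
  refine ⟨F, G, H, hF, hG, hH, hHG, fun heq => hab ?_⟩
  have hlhs : sysJoin H (sysMeet F G) c = c := by
    refine hH.sysJoin_eq_self (hF.sysMeet hG) (by simp [H]) ?_
    show (c ⊔ b) ⊓ (c ⊔ a) = c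
    rw [sup_eq_right.mpr inf_le_right, sup_eq_right.mpr hca, inf_comm]
  obtain ⟨-, hhz, hfz⟩ := (hH.isLeast_sysJoin hF c).1
  set z := sysJoin H F c
  have hbz : b ≤ z := sup_eq_left.mp hfz
  have hzc : ¬ z ≤ c := fun hzc => hba ((hbz.trans hzc).trans inf_le_left)
  have haz : a ≤ z := by simpa [H, hzc] using hhz
  have hrhs : sysMeet (sysJoin H F) G c = a := by
    show z ⊓ (c ⊔ a) = a
    rw [sup_eq_right.mpr hca, inf_eq_right.mpr haz]
  have hc_eq : c = a := by rw [← hlhs, congrFun heq c, hrhs]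
  exact inf_eq_left.mp hc_eq

end Systems

theorem stmt11 {P : Type*} [Lattice P] [Fintype P] :
    (∀ f g h : P → P, IsSystem f → IsSystem g → IsSystem h →
      (∀ a, h a ≤ g a) →
      sysJoin h (sysMeet f g) = sysMeet (sysJoin h f) g) ↔
    ∀ a b : P, a ≤ b ∨ b ≤ a := by
  refine ⟨fun H a b => ?_, fun hlin f g h hf hg hh hhg => ?_⟩
  · by_contra! hab
    obtain ⟨f, g, h, hf, hg, hh, hhg, hne⟩ := exists_isSystem_sysJoin_sysMeet_ne hab.1 hab.2
    exact hne (H f g h hf hg hh hhg)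
  · exact le_antisymm (sysJoin_sysMeet_le_sysMeet_sysJoin hf hg hh hhg)
      (sysMeet_sysJoin_le_sysJoin_sysMeet hlin hf hg hh)
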